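/- arXiv:1102.5683 — 6 statements merged into one kernel-verified Lean document; each statement's English description precedes it below -/
import Mathlib

section
/- Let B and M be positive integers with B > 2M, and let a, a', c be positive integers satisfying 2a'+1 ≥ B, a'+cM ≤ a, and 2a - cB ≤ a'. Then a' ≤ c(B-2M) and c ≥ (B-1)/(2(B-2M)); consequently a ≥ ⌈(B-1)/2⌉ + ⌈(B-1)/(2(B-2M))⌉·M. -/
/-! Eliminating `a` between `a' + c M ≤ a` and `2a ≤ a' + c B` gives `a' ≤ c (B - 2M)`; combined
with `B - 1 ≤ 2a'` this bounds `c` from below, and `a ≥ a' + c M` then turns the lower bounds on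
`a'` and `c` (both integers, so they may be rounded up) into the lower bound on `a`. -/

section OrderedRing

variable {R : Type*} [CommRing R] [LinearOrder R] [IsStrictOrderedRing R]

theorem le_mul_sub_two_mul_of_add_mul_le {B M a a' c : R} (h2 : a' + c * M ≤ a)
    (h3 : 2 * a - c * B ≤ a') : a' ≤ c * (B - 2 * M) := by
  linarith

end OrderedRing

section OrderedField

variable {K : Type*} [Field K] [LinearOrder K] [IsStrictOrderedRing K]

theorem sub_one_div_two_mul_le_of_le_mul {B D x c : K} (hD : 0 < D) (hB : B ≤ 2 * x + 1)
    (hx : x ≤ c * D) : (B - 1) / (2 * D) ≤ c := by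
  rw [div_le_iff₀ (by positivity)]
  linarith

end OrderedField

theorem Int.ceil_sub_one_div_two_le {B x : ℤ} (h : B ≤ 2 * x + 1) : ⌈((B : ℝ) - 1) / 2⌉ ≤ x := by
  rw [Int.ceil_le, div_le_iff₀ two_pos]
  exact_mod_cast (by linarith : B - 1 ≤ x * 2)

theorem srz_parameters_optimal_general (B M a a' c : ℤ) (hM : 0 < M) (hB : B > 2 * M)
    (h1 : 2 * a' + 1 ≥ B) (h2 : a' + c * M ≤ a) (h3 : 2 * a - c * B ≤ a') :
    a' ≤ c * (B - 2 * M) ∧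
    (c : ℝ) ≥ ((B : ℝ) - 1) / (2 * ((B : ℝ) - 2 * M)) ∧
    a ≥ ⌈((B : ℝ) - 1) / 2⌉ + ⌈((B : ℝ) - 1) / (2 * ((B : ℝ) - 2 * M))⌉ * M := by
  have hslack : a' ≤ c * (B - 2 * M) := le_mul_sub_two_mul_of_add_mul_le h2 h3
  have hc : ((B : ℝ) - 1) / (2 * ((B : ℝ) - 2 * M)) ≤ c := by
    refine sub_one_div_two_mul_le_of_le_mul (x := (a' : ℝ)) ?_ (by exact_mod_cast h1) ?_
    · have : (2 * M : ℝ) < B := by exact_mod_cast hB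
      linarith
    · exact_mod_cast hslack
  refine ⟨hslack, hc, ?_⟩
  calc ⌈((B : ℝ) - 1) / 2⌉ + ⌈((B : ℝ) - 1) / (2 * ((B : ℝ) - 2 * M))⌉ * M
      ≤ a' + c * M :=
        add_le_add (Int.ceil_sub_one_div_two_le h1)
          (mul_le_mul_of_nonneg_right (Int.ceil_le.2 hc) hM.le)
    _ ≤ a := h2

theorem srz_parameters_optimal (B M a a' c : ℤ) (hM : 0 < M) (hB : B > 2 * M)
    (hapos : 0 < a) (ha'pos : 0 < a') (hcpos : 0 < c)
    (h1 : 2 * a' + 1 ≥ B) (h2 : a' + c * M ≤ a) (h3 : 2 * a - c * B ≤ a') :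
    a' ≤ c * (B - 2 * M) ∧
    (c : ℝ) ≥ ((B : ℝ) - 1) / (2 * ((B : ℝ) - 2 * M)) ∧
    a ≥ ⌈((B : ℝ) - 1) / 2⌉ + ⌈((B : ℝ) - 1) / (2 * ((B : ℝ) - 2 * M))⌉ * M :=
  srz_parameters_optimal_general B M a a' c hM hB h1 h2 h3
end

section
/- Let B and M be positive integers with B > 2M, and set c = ⌈(B-1)/(2(B-2M))⌉, a' = ⌈(B-1)/2⌉, a = a' + cM. For every integer z with |z| ≤ 2a there exists an integer q with |q| ≤ c such that |z - qB| ≤ a'. -/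
/-!
Since `B ≤ 2a' + 1`, every integer lies within `a'` of a multiple of `B`; for `z ≥ 0` take the
least `q` with `z - qB ≤ a'`. Then `q ≥ 0` because `a' < B`, and `q ≤ c` because
`z - cB ≤ 2a' + 2cM - cB = 2a' - c(B - 2M) ≤ a'`, the last step being exactly what the choice of
`c` guarantees. Negative `z` follow by symmetry.
-/

section CeilDiv

variable {K : Type*} [Field K] [LinearOrder K] [IsStrictOrderedRing K] [FloorRing K]

lemma le_mul_ceil_div {x d : K} (hd : 0 < d) : x ≤ d * ⌈x / d⌉ := by
  rw [mul_comm, ← div_le_iff₀ hd]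
  exact Int.le_ceil _

lemma mul_ceil_div_lt_add {x d : K} (hd : 0 < d) : d * ⌈x / d⌉ < x + d := by
  rw [mul_comm, ← lt_div_iff₀ hd, add_div, div_self hd.ne']
  exact Int.ceil_lt_add_one _

end CeilDiv

lemma exists_nonneg_le_abs_sub_mul_le {B r c z : ℤ} (hrB : r < B) (hBr : B ≤ 2 * r + 1)
    (hz0 : 0 ≤ z) (hz : z ≤ r + c * B) :
    ∃ q : ℤ, 0 ≤ q ∧ q ≤ c ∧ |z - q * B| ≤ r := by
  have hB : 0 < B := by omega
  have hdiv := Int.mul_ediv_add_emod (r - z) B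
  have hmod_nonneg := Int.emod_nonneg (r - z) hB.ne'
  have hmod_lt := Int.emod_lt_of_pos (r - z) hB
  refine ⟨-((r - z) / B), ?_, ?_, ?_⟩
  · have : (r - z) / B < 1 := (Int.ediv_lt_iff_lt_mul hB).2 (by omega)
    omega
  · have : -c ≤ (r - z) / B := (Int.le_ediv_iff_mul_le hB).2 (by linarith)
    omega
  · rw [abs_le]
    constructor <;> linarith

lemma exists_abs_le_abs_sub_mul_le {B r c z : ℤ} (hrB : r < B) (hBr : B ≤ 2 * r + 1)
    (hz : |z| ≤ r + c * B) :
    ∃ q : ℤ, |q| ≤ c ∧ |z - q * B| ≤ r := by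
  obtain ⟨q, hq0, hqc, hq⟩ := exists_nonneg_le_abs_sub_mul_le hrB hBr (abs_nonneg z) hz
  rcases abs_choice z with hzabs | hzabs
  · exact ⟨q, by rwa [abs_of_nonneg hq0], by rwa [hzabs] at hq⟩
  · refine ⟨-q, by rwa [abs_neg, abs_of_nonneg hq0], ?_⟩
    rw [hzabs] at hq
    rwa [show z - -q * B = -(-z - q * B) by ring, abs_neg]

theorem carry_digit_exists (B M : ℤ) (hM : 0 < M) (hB : B > 2 * M)
    (c a' a : ℤ)
    (hc : c = ⌈((B : ℝ) - 1) / (2 * ((B : ℝ) - 2 * M))⌉)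
    (ha' : a' = ⌈((B : ℝ) - 1) / 2⌉)
    (ha : a = a' + c * M)
    (z : ℤ) (hz : |z| ≤ 2 * a) :
    ∃ q : ℤ, |q| ≤ c ∧ |z - q * B| ≤ a' := by
  have hgap : (0 : ℝ) < 2 * ((B : ℝ) - 2 * M) := by
    have : (2 * M : ℝ) < B := by exact_mod_cast hB
    linarith
  have ha'_ge : B - 1 ≤ 2 * a' := by
    have := le_mul_ceil_div (x := (B : ℝ) - 1) two_pos
    rw [← ha'] at this
    exact_mod_cast this
  have ha'_lt : 2 * a' < B + 1 := by
    have := mul_ceil_div_lt_add (x := (B : ℝ) - 1) two_pos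
    rw [← ha'] at this
    exact_mod_cast (by linarith : (2 * a' : ℝ) < B + 1)
  have hc_ge : B - 1 ≤ 2 * (B - 2 * M) * c := by
    have := le_mul_ceil_div (x := (B : ℝ) - 1) hgap
    rw [← hc] at this
    exact_mod_cast this
  have ha'_le : a' ≤ c * (B - 2 * M) := by
    have : 2 * a' < 2 * (c * (B - 2 * M)) + 2 := by linarith
    omega
  exact exists_abs_le_abs_sub_mul_le (by omega) (by omega) (by rw [ha] at hz; linarith)
end

section
/- Let β be a complex number with |β| > 1 that is SRZ, i.e., β is a root of a polynomial S(X) = ∑_{i=-h}^{k} b_i X^i with integer coefficients such that b_0 > 2·∑_{i≠0} |b_i|. Set B = b_0, M = ∑_{i≠0} |b_i|, a = ⌈(B-1)/2⌉ + ⌈(B-1)/(2(B-2M))⌉·M, and A = {-a,…,a}. Then the set Fin_A(β) = { ∑_{i∈I} x_i β^i : I ⊂ ℤ finite, x_i ∈ A } is closed under addition. -/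
/-- `FinA β a` is the set of numbers with a finite β-representation with
integer digits of absolute value at most `a`. -/
def FinA (β : ℂ) (a : ℤ) : Set ℂ :=
  {x : ℂ | ∃ f : ℤ → ℤ, (Function.support f).Finite ∧ (∀ i, |f i| ≤ a) ∧
      x = ∑ᶠ i : ℤ, (f i : ℂ) * β ^ i}

/-!
The digits of `x + y` lie in `[-2a, 2a]`. For any finitely supported `q`, subtracting the
coefficients of `(∑ q_i X^i) · S(X)` from a digit string does not change its value at `β`,
since `S(β) = 0`; the new digit at `m` is `d_m - q_m B - ∑_{j ≠ 0} q_{m-j} b_j`. Each `d_m`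
admits a quotient `q_m` with `|d_m - q_m B| ≤ A := ⌈(B-1)/2⌉` and `|q_m| ≤ c`, where
`c = ⌈(B-1)/(2(B-2M))⌉`, because `2a - A = A + 2cM ≤ cB`. The new digits are then bounded
by `A + cM = a`.
-/

open Function Finset

section DigitValue

variable {K : Type*} [Field K] {β : K} {f g q : ℤ → ℤ}

noncomputable def digitValue (β : K) (f : ℤ → ℤ) : K := ∑ᶠ i : ℤ, (f i : K) * β ^ i

def digitConv (I : Finset ℤ) (b q : ℤ → ℤ) (m : ℤ) : ℤ := ∑ j ∈ I, q (m - j) * b j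

lemma hasFiniteSupport_digit_mul_zpow (hf : f.HasFiniteSupport) (β : K) :
    (fun i => (f i : K) * β ^ i).HasFiniteSupport :=
  hf.subset fun i hi h0 => hi (by simp [h0])

lemma digitValue_add (hf : f.HasFiniteSupport) (hg : g.HasFiniteSupport) :
    digitValue β (f + g) = digitValue β f + digitValue β g := by
  rw [digitValue, digitValue, digitValue, ← finsum_add_distrib
    (hasFiniteSupport_digit_mul_zpow hf β) (hasFiniteSupport_digit_mul_zpow hg β)]
  exact finsum_congr fun i => by push_cast [Pi.add_apply]; ring

lemma digitValue_sub (hf : f.HasFiniteSupport) (hg : g.HasFiniteSupport) :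
    digitValue β (f - g) = digitValue β f - digitValue β g := by
  rw [digitValue, digitValue, digitValue, ← finsum_sub_distrib
    (hasFiniteSupport_digit_mul_zpow hf β) (hasFiniteSupport_digit_mul_zpow hg β)]
  exact finsum_congr fun i => by push_cast [Pi.sub_apply]; ring

lemma hasFiniteSupport_shift (hq : q.HasFiniteSupport) (j : ℤ) :
    (fun m => q (m - j)).HasFiniteSupport :=
  hq.comp_of_injective sub_left_injective

lemma hasFiniteSupport_digitConv (I : Finset ℤ) (b : ℤ → ℤ) (hq : q.HasFiniteSupport) :
    (digitConv I b q).HasFiniteSupport :=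
  HasFiniteSupport.sum (fun j => (hasFiniteSupport_shift hq j).fun_mul_left _) I

lemma digitValue_digitConv (hβ : β ≠ 0) (I : Finset ℤ) (b : ℤ → ℤ) (hq : q.HasFiniteSupport) :
    digitValue β (digitConv I b q) = (∑ j ∈ I, (b j : K) * β ^ j) * digitValue β q := by
  have hshift : ∀ j, ∑ᶠ m, (q (m - j) : K) * b j * β ^ m
      = (b j : K) * β ^ j * digitValue β q := fun j => by
    rw [← finsum_comp_equiv (Equiv.addRight j), digitValue, mul_finsum]
    refine finsum_congr fun i => ?_
    simp only [Equiv.coe_addRight, add_sub_cancel_right, zpow_add₀ hβ]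
    ring
  calc digitValue β (digitConv I b q)
      = ∑ᶠ m, ∑ j ∈ I, (q (m - j) : K) * b j * β ^ m :=
        finsum_congr fun m => by push_cast [digitConv]; rw [sum_mul]
    _ = ∑ j ∈ I, ∑ᶠ m, (q (m - j) : K) * b j * β ^ m :=
        finsum_sum_comm _ _ fun j _ =>
          (hasFiniteSupport_shift hq j).subset fun m hm h0 => hm (by simp [h0])
    _ = _ := by simp_rw [hshift, sum_mul]

end DigitValue

section Arithmetic

variable {B A c n : ℤ}

lemma exists_abs_sub_mul_le_of_nonneg (hB : 0 < B) (hA : B ≤ 2 * A + 1) (hc : 0 ≤ c)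
    (hn0 : 0 ≤ n) (hn : n ≤ A + c * B) :
    ∃ q, |n - q * B| ≤ A ∧ 0 ≤ q ∧ q ≤ c ∧ (n ≤ A → q = 0) := by
  by_cases hnA : n ≤ A
  · exact ⟨0, by rw [zero_mul, sub_zero, abs_of_nonneg hn0]; exact hnA, le_rfl,
      hc, fun _ => rfl⟩
  -- `q = ⌈(n - A) / B⌉`, the least quotient leaving a remainder at most `A`
  set q := (n - A + B - 1) / B
  have hdiv := Int.mul_ediv_add_emod (n - A + B - 1) B
  have hmod0 := Int.emod_nonneg (n - A + B - 1) hB.ne'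
  have hmodB := Int.emod_lt_of_pos (n - A + B - 1) hB
  exact ⟨q, abs_le.mpr ⟨by linarith, by linarith⟩, by nlinarith, by nlinarith,
    fun h => absurd h hnA⟩

lemma exists_abs_sub_mul_le (hB : 0 < B) (hA : B ≤ 2 * A + 1) (hc : 0 ≤ c)
    (hn : |n| ≤ A + c * B) : ∃ q, |n - q * B| ≤ A ∧ |q| ≤ c ∧ (n = 0 → q = 0) := by
  rcases le_or_gt 0 n with hn0 | hn0
  · obtain ⟨q, hr, hq0, hqc, hq⟩ :=
      exists_abs_sub_mul_le_of_nonneg hB hA hc hn0 ((le_abs_self n).trans hn)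
    exact ⟨q, hr, abs_le.mpr ⟨by linarith, hqc⟩, fun h => hq (by omega)⟩
  · obtain ⟨q, hr, hq0, hqc, -⟩ :=
      exists_abs_sub_mul_le_of_nonneg hB hA hc (neg_nonneg.mpr hn0.le) (abs_of_neg hn0 ▸ hn)
    refine ⟨-q, ?_, abs_le.mpr ⟨by linarith, by linarith⟩, fun h => absurd h hn0.ne⟩
    rwa [← abs_neg, show -(n - -q * B) = -n - q * B by ring]

lemma le_two_mul_ceil_half_add_one (B : ℤ) : B ≤ 2 * ⌈((B : ℝ) - 1) / 2⌉ + 1 := by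
  have hceil := Int.le_ceil (((B : ℝ) - 1) / 2)
  have : (B : ℝ) ≤ 2 * ⌈((B : ℝ) - 1) / 2⌉ + 1 := by linarith
  exact_mod_cast this

lemma ceil_half_le_ceil_div_mul (B : ℤ) {D : ℤ} (hD : 0 < D) :
    ⌈((B : ℝ) - 1) / 2⌉ ≤ ⌈((B : ℝ) - 1) / (2 * D)⌉ * D := by
  have hDR : (0 : ℝ) < D := by exact_mod_cast hD
  refine Int.ceil_le.mpr ?_
  calc ((B : ℝ) - 1) / 2 = ((B : ℝ) - 1) / (2 * D) * D := by field_simp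
    _ ≤ _ := by push_cast; exact mul_le_mul_of_nonneg_right (Int.le_ceil _) hDR.le

end Arithmetic

lemma ne_zero_of_sum_mul_zpow_eq_zero {K : Type*} [Field K] [CharZero K] {β : K}
    {I : Finset ℤ} {b : ℤ → ℤ} (hroot : ∑ j ∈ I, (b j : K) * β ^ j = 0) (h0 : 0 ∈ I)
    (hb0 : b 0 ≠ 0) : β ≠ 0 := by
  rintro rfl
  rw [sum_eq_single_of_mem 0 h0 fun j _ hj => by rw [zero_zpow j hj, mul_zero]] at hroot
  simp [hb0] at hroot

lemma digitValue_mem_finA {β : ℂ} (hβ : β ≠ 0) {I : Finset ℤ} {b : ℤ → ℤ}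
    (hroot : ∑ j ∈ I, (b j : ℂ) * β ^ j = 0) (h0 : 0 ∈ I) {A c : ℤ} (hB : 0 < b 0)
    (hA : b 0 ≤ 2 * A + 1) (hc : 0 ≤ c) {d : ℤ → ℤ} (hd : d.HasFiniteSupport)
    (hdA : ∀ i, |d i| ≤ A + c * b 0) :
    digitValue β d ∈ FinA β (A + c * ∑ j ∈ I.erase 0, |b j|) := by
  choose q hqA hqc hq0 using fun i => exists_abs_sub_mul_le hB hA hc (hdA i)
  have hq : q.HasFiniteSupport := hd.subset fun i hi h0 => hi (hq0 i h0)
  refine ⟨d - digitConv I b q, (hd.union (hasFiniteSupport_digitConv I b hq)).subset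
    (support_sub _ _), fun m => ?_, ?_⟩
  · have hsplit : (d - digitConv I b q) m
        = (d m - q m * b 0) - ∑ j ∈ I.erase 0, q (m - j) * b j := by
      rw [Pi.sub_apply, digitConv, ← add_sum_erase I _ h0, sub_zero]
      ring
    have hcarry : |∑ j ∈ I.erase 0, q (m - j) * b j| ≤ c * ∑ j ∈ I.erase 0, |b j| := by
      rw [mul_sum]
      refine (abs_sum_le_sum_abs _ _).trans (sum_le_sum fun j _ => ?_)
      rw [abs_mul]
      exact mul_le_mul_of_nonneg_right (hqc _) (abs_nonneg _)
    rw [hsplit]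
    exact (abs_sub _ _).trans (add_le_add (hqA m) hcarry)
  · change digitValue β d = digitValue β (d - digitConv I b q)
    rw [digitValue_sub hd (hasFiniteSupport_digitConv I b hq), digitValue_digitConv hβ I b hq,
      hroot, zero_mul, sub_zero]

theorem srz_addition_closed_general (β : ℂ)
    (h k : ℕ) (b : ℤ → ℤ)
    (hroot : ∑ i ∈ Finset.Icc (-(h : ℤ)) (k : ℤ), (b i : ℂ) * β ^ i = 0)
    (B M : ℤ) (hB : B = b 0)
    (hM : M = ∑ i ∈ (Finset.Icc (-(h : ℤ)) (k : ℤ)).erase 0, |b i|)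
    (hstrong : B > 2 * M)
    (a : ℤ)
    (ha : a = ⌈((B : ℝ) - 1) / 2⌉ + ⌈((B : ℝ) - 1) / (2 * ((B : ℝ) - 2 * M))⌉ * M) :
    ∀ x ∈ FinA β a, ∀ y ∈ FinA β a, x + y ∈ FinA β a := by
  rintro _ ⟨f, hf, hfa, rfl⟩ _ ⟨g, hg, hga, rfl⟩
  have hM0 : 0 ≤ M := hM ▸ sum_nonneg fun i _ => abs_nonneg (b i)
  have h0 : (0 : ℤ) ∈ Finset.Icc (-(h : ℤ)) (k : ℤ) := by simp
  have hβ : β ≠ 0 := ne_zero_of_sum_mul_zpow_eq_zero hroot h0 (by omega)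
  have hD : ((B : ℝ) - 2 * M) = ((B - 2 * M : ℤ) : ℝ) := by push_cast; ring
  rw [hD] at ha
  set A := ⌈((B : ℝ) - 1) / 2⌉
  set c := ⌈((B : ℝ) - 1) / (2 * ((B - 2 * M : ℤ) : ℝ))⌉
  have hA : B ≤ 2 * A + 1 := le_two_mul_ceil_half_add_one B
  have hB1 : (1 : ℝ) ≤ B := by exact_mod_cast (by omega : 1 ≤ B)
  have hD0 : (0 : ℝ) < (B - 2 * M : ℤ) := by exact_mod_cast (by omega : 0 < B - 2 * M)
  have hc : 0 ≤ c := Int.ceil_nonneg (div_nonneg (by linarith) (by linarith))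
  have hAc : A ≤ c * (B - 2 * M) := ceil_half_le_ceil_div_mul B (by omega)
  have hdigit : ∀ i, |(f + g) i| ≤ A + c * b 0 := fun i => by
    rw [Pi.add_apply, ← hB]
    linarith [abs_add_le (f i) (g i), hfa i, hga i, mul_sub c B (2 * M)]
  rw [ha, hM]
  change digitValue β f + digitValue β g ∈ _
  rw [← digitValue_add hf hg]
  exact digitValue_mem_finA hβ hroot h0 (by omega) (by omega) hc
    ((hf.union hg).subset (support_add _ _)) hdigit

theorem srz_addition_closed (β : ℂ) (hβ : 1 < ‖β‖)
    (h k : ℕ) (b : ℤ → ℤ)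
    (hroot : ∑ i ∈ Finset.Icc (-(h : ℤ)) (k : ℤ), (b i : ℂ) * β ^ i = 0)
    (B M : ℤ) (hB : B = b 0)
    (hM : M = ∑ i ∈ (Finset.Icc (-(h : ℤ)) (k : ℤ)).erase 0, |b i|)
    (hstrong : B > 2 * M)
    (a : ℤ)
    (ha : a = ⌈((B : ℝ) - 1) / 2⌉ + ⌈((B : ℝ) - 1) / (2 * ((B : ℝ) - 2 * M))⌉ * M) :
    ∀ x ∈ FinA β a, ∀ y ∈ FinA β a, x + y ∈ FinA β a :=
  srz_addition_closed_general β h k b hroot B M hB hM hstrong a ha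
end

section
/- Let β be a complex number with |β| > 1 that is WRZ, i.e., β is a root of W(X) = ∑_{i=-h}^{k} b_i X^i with integer coefficients and b_0 > ∑_{i≠0} |b_i|. Set B = b_0, M = ∑_{i≠0}|b_i|, a = ⌈(B-1)/2⌉ + M, and A = {-a,…,a}. Then Fin_A(β) is closed under addition. -/
open LaurentPolynomial AddMonoidAlgebra

namespace LaurentPolynomial

def excess (c : ℤ) (p : ℤ[T;T⁻¹]) : ℤ :=
  ∑ i ∈ p.coeff.support, max (|p.coeff i| - c) 0

theorem excess_nonneg (c : ℤ) (p : ℤ[T;T⁻¹]) : 0 ≤ excess c p :=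
  Finset.sum_nonneg fun _ _ => le_max_right _ _

theorem excess_eq_sum_of_support_subset {c : ℤ} (hc : 0 ≤ c) {p : ℤ[T;T⁻¹]} {s : Finset ℤ}
    (hs : p.coeff.support ⊆ s) : excess c p = ∑ i ∈ s, max (|p.coeff i| - c) 0 := by
  refine Finset.sum_subset hs fun i _ hi => ?_
  rw [Finsupp.notMem_support_iff.mp hi, abs_zero, zero_sub, max_eq_right (neg_nonpos.mpr hc)]

variable {W : ℤ[T;T⁻¹]} {c M : ℤ}

/-- At `j` the excess falls by more than `M`: either `|p_j| ≥ W_0 > M`, or `|p_j| < W_0 ≤ 2c + 1`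
and the new coefficient `W_0 - |p_j|` is at most `c`. Elsewhere the coefficients grow by at most
`M` in total. -/
theorem excess_sub_single_mul_lt (hM : ∀ t : Finset ℤ, 0 ∉ t → ∑ i ∈ t, |W.coeff i| ≤ M)
    (hdom : M < W.coeff 0) (hc : W.coeff 0 ≤ 2 * c + 1) {p : ℤ[T;T⁻¹]} {j : ℤ}
    (hj : c + M < |p.coeff j|) :
    excess c (p - single j (p.coeff j).sign * W) < excess c p := by
  set ε := (p.coeff j).sign
  set q := p - single j ε * W
  have hq : ∀ m, q.coeff m = p.coeff m - ε * W.coeff (-j + m) := fun m => by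
    rw [coeff_sub, Finsupp.sub_apply, coeff_single_mul_apply]
  have hM0 : 0 ≤ M := by simpa using hM ∅
  have hc0 : 0 ≤ c := by omega
  have hpj : p.coeff j ≠ 0 := fun h0 => by rw [h0, abs_zero] at hj; omega
  have habs : ∀ x, |ε * x| = |x| := fun x => by
    rw [abs_mul, Int.abs_sign_of_ne_zero hpj, one_mul]
  set s := p.coeff.support ∪ q.coeff.support
  rw [excess_eq_sum_of_support_subset hc0 Finset.subset_union_right,
    excess_eq_sum_of_support_subset hc0 Finset.subset_union_left]
  have hjs : j ∈ s := Finset.mem_union_left _ (Finsupp.mem_support_iff.mpr hpj)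
  rw [← Finset.add_sum_erase s _ hjs, ← Finset.add_sum_erase s _ hjs]
  have hcenter : max (|q.coeff j| - c) 0 + (M + 1) ≤ max (|p.coeff j| - c) 0 := by
    have hqj : q.coeff j = ε * (|p.coeff j| - W.coeff 0) := by
      rw [hq, neg_add_cancel, mul_sub, Int.sign_mul_abs]
    rw [hqj, habs]
    simp only [abs_eq_max_neg] at hj ⊢
    omega
  have hoff : ∀ m ∈ s.erase j,
      max (|q.coeff m| - c) 0 ≤ max (|p.coeff m| - c) 0 + |W.coeff (-j + m)| := fun m _ => by
    have htri := abs_sub (p.coeff m) (ε * W.coeff (-j + m))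
    rw [habs] at htri
    have hWm := abs_nonneg (W.coeff (-j + m))
    rw [hq]; omega
  have hmass : ∑ m ∈ s.erase j, |W.coeff (-j + m)| ≤ M := by
    simpa only [Finset.sum_map, addLeftEmbedding_apply] using
      hM ((s.erase j).map (addLeftEmbedding (-j))) (by simp)
  have hsum := Finset.sum_le_sum hoff
  rw [Finset.sum_add_distrib] at hsum
  omega

theorem exists_dvd_sub_abs_coeff_le (hM : ∀ t : Finset ℤ, 0 ∉ t → ∑ i ∈ t, |W.coeff i| ≤ M)
    (hdom : M < W.coeff 0) (hc : W.coeff 0 ≤ 2 * c + 1) (p : ℤ[T;T⁻¹]) :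
    ∃ q, W ∣ q - p ∧ ∀ i, |q.coeff i| ≤ c + M := by
  by_cases hsmall : ∀ i, |p.coeff i| ≤ c + M
  · exact ⟨p, by simp, hsmall⟩
  push Not at hsmall
  obtain ⟨j, hj⟩ := hsmall
  have hlt := excess_sub_single_mul_lt hM hdom hc hj
  obtain ⟨q, hdvd, hq⟩ :=
    exists_dvd_sub_abs_coeff_le hM hdom hc (p - single j (p.coeff j).sign * W)
  refine ⟨q, ?_, hq⟩
  rw [show q - p = q - (p - single j (p.coeff j).sign * W) - single j (p.coeff j).sign * W by ring]
  exact dvd_sub hdvd (dvd_mul_left W _)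
termination_by (excess c p).toNat
decreasing_by have := excess_nonneg c (p - single j (p.coeff j).sign * W); omega

theorem eval₂_eq_finsum {R S : Type*} [CommSemiring R] [CommSemiring S] (f : R →+* S) (x : Sˣ)
    (p : R[T;T⁻¹]) : eval₂ f x p = ∑ᶠ i : ℤ, f (p.coeff i) * ((x ^ i : Sˣ) : S) := by
  conv_lhs => rw [← sum_coeff_single p]
  rw [map_finsuppSum, Finsupp.sum, finsum_eq_sum_of_support_subset (s := p.coeff.support)]
  · simp [single_eq_C_mul_T]
  · intro i hi
    contrapose! hi
    simp [Finsupp.notMem_support_iff.mp hi]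

end LaurentPolynomial

theorem mem_FinA_iff (u : ℂˣ) (a : ℤ) (x : ℂ) :
    x ∈ FinA u a ↔ ∃ p : ℤ[T;T⁻¹], (∀ i, |p.coeff i| ≤ a) ∧ eval₂ (Int.castRingHom ℂ) u p = x := by
  simp only [FinA, Set.mem_ofPred_eq, eval₂_eq_finsum, Units.val_zpow_eq_zpow_val, eq_comm (b := x)]
  constructor
  · rintro ⟨f, hf, hfa, rfl⟩
    exact ⟨ofCoeff (Finsupp.ofSupportFinite f hf), hfa, rfl⟩
  · rintro ⟨p, hpa, rfl⟩
    exact ⟨p.coeff, p.coeff.hasFiniteSupport, hpa, rfl⟩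

theorem add_mem_FinA {u : ℂˣ} {W : ℤ[T;T⁻¹]} {c M : ℤ}
    (hW : eval₂ (Int.castRingHom ℂ) u W = 0)
    (hM : ∀ t : Finset ℤ, 0 ∉ t → ∑ i ∈ t, |W.coeff i| ≤ M) (hdom : M < W.coeff 0)
    (hc : W.coeff 0 ≤ 2 * c + 1) {x y : ℂ} (hx : x ∈ FinA u (c + M)) (hy : y ∈ FinA u (c + M)) :
    x + y ∈ FinA u (c + M) := by
  obtain ⟨p, -, rfl⟩ := (mem_FinA_iff u _ x).mp hx
  obtain ⟨q, -, rfl⟩ := (mem_FinA_iff u _ y).mp hy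
  obtain ⟨r, ⟨s, hs⟩, hr⟩ := exists_dvd_sub_abs_coeff_le hM hdom hc (p + q)
  refine (mem_FinA_iff u _ _).mpr ⟨r, hr, ?_⟩
  rw [← map_add, ← sub_eq_zero, ← map_sub, hs, map_mul, hW, zero_mul]

theorem wrz_addition_closed (β : ℂ) (hβ : 1 < ‖β‖)
    (h k : ℕ) (b : ℤ → ℤ)
    (hroot : ∑ i ∈ Finset.Icc (-(h : ℤ)) (k : ℤ), (b i : ℂ) * β ^ i = 0)
    (B M : ℤ) (hB : B = b 0)
    (hM : M = ∑ i ∈ (Finset.Icc (-(h : ℤ)) (k : ℤ)).erase 0, |b i|)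
    (hweak : B > M)
    (a : ℤ)
    (ha : a = ⌈((B : ℝ) - 1) / 2⌉ + M) :
    ∀ x ∈ FinA β a, ∀ y ∈ FinA β a, x + y ∈ FinA β a := by
  set I := Finset.Icc (-(h : ℤ)) (k : ℤ)
  set u := Units.mk0 β (norm_pos_iff.mp (one_pos.trans hβ))
  set W : ℤ[T;T⁻¹] := ∑ i ∈ I, single i (b i)
  have hW : ∀ m, W.coeff m = if m ∈ I then b m else 0 := fun m => by
    simp only [W, coeff_sum, Finsupp.finsetSum_apply, coeff_single, Finsupp.single_apply,
      Finset.sum_ite_eq']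
  have hWβ : eval₂ (Int.castRingHom ℂ) u W = 0 := by
    simpa [W, u, single_eq_C_mul_T] using hroot
  have hW0 : W.coeff 0 = B := by simp [hW, I, hB]
  have hWM : ∀ t : Finset ℤ, 0 ∉ t → ∑ i ∈ t, |W.coeff i| ≤ M := fun t ht => by
    simp only [hW, apply_ite, abs_zero, Finset.sum_ite_mem, hM]
    exact Finset.sum_le_sum_of_subset_of_nonneg (fun i hi => by grind) fun _ _ _ => abs_nonneg _
  have hc : W.coeff 0 ≤ 2 * ⌈((B : ℝ) - 1) / 2⌉ + 1 := by
    have := Int.le_ceil (((B : ℝ) - 1) / 2)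
    rw [hW0]
    exact_mod_cast (by linarith : (B : ℝ) ≤ 2 * ⌈((B : ℝ) - 1) / 2⌉ + 1)
  subst ha
  exact fun x hx y hy => add_mem_FinA hWβ hWM (hW0 ▸ hweak) hc hx hy
end

section
/- Let B > M ≥ 1 be integers, a = ⌈(B-1)/2⌉ + M, a' = ⌈(B-1)/2⌉, s = ⌈a/(B-M)⌉. For each 1 ≤ ℓ < s: if |z| ≤ 2a - (ℓ-1)(B-M) and q = 0 when |z| ≤ a', q = sgn(z) otherwise, then for any integer F with |F| ≤ M one has |z - qB - F| ≤ 2a - ℓ(B-M); and for ℓ = s, |z - qB - F| ≤ a. -/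
/-!
With `q` chosen as in the statement, subtracting `q * B` maps the window `|z| ≤ C + (B - M)`
into `|z - q * B| ≤ C - M` as soon as `a ≤ C`, because `2 * a' ≥ B - 1`; the perturbation `F`
then costs at most `M`. Each step thus shrinks the bound by `B - M` while it stays at least `a`,
and the choice of `s = ⌈a / (B - M)⌉` is exactly what keeps `2 * a - ℓ * (B - M) ≥ a` for `ℓ < s`
and `2 * a - (s - 1) * (B - M) ≤ a + (B - M)`.
-/

section CeilDiv

variable {K : Type*} [Field K] [LinearOrder K] [IsStrictOrderedRing K] [FloorRing K]

theorem le_ceil_div_mul {a d : ℤ} (hd : 0 < d) : a ≤ ⌈(a : K) / d⌉ * d := by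
  have hd' : (0 : K) < d := by exact_mod_cast hd
  have h : (a : K) ≤ ⌈(a : K) / d⌉ * d := (div_le_iff₀ hd').mp (Int.le_ceil _)
  exact_mod_cast h

theorem ceil_div_sub_one_mul_lt {a d : ℤ} (hd : 0 < d) : (⌈(a : K) / d⌉ - 1) * d < a := by
  have hd' : (0 : K) < d := by exact_mod_cast hd
  have h : ((⌈(a : K) / d⌉ - 1 : ℤ) : K) < a / d := Int.lt_ceil.mp (by omega)
  exact_mod_cast (lt_div_iff₀ hd').mp h

theorem sub_one_le_two_mul_ceil_half (B : ℤ) : B - 1 ≤ 2 * ⌈((B : K) - 1) / 2⌉ := by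
  have h : ((B : K) - 1) / 2 ≤ ⌈((B : K) - 1) / 2⌉ := Int.le_ceil _
  have h' : ((B - 1 : ℤ) : K) ≤ ((2 * ⌈((B : K) - 1) / 2⌉ : ℤ) : K) := by push_cast; linarith
  exact_mod_cast h'

end CeilDiv

theorem abs_sub_digit_mul_sub_le {B M a' C z F : ℤ} (hMB : M < B) (hB : B - 1 ≤ 2 * a') (hC : a' + M ≤ C)
    (hz : |z| ≤ C + (B - M)) (hF : |F| ≤ M) :
    |z - (if |z| ≤ a' then 0 else z.sign) * B - F| ≤ C := by
  rw [abs_le] at hz hF ⊢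
  split_ifs with hsmall
  · rw [abs_le] at hsmall
    omega
  · rcases lt_abs.mp (not_le.mp hsmall) with hpos | hneg
    · rw [Int.sign_eq_one_of_pos (by omega)]
      omega
    · rw [Int.sign_eq_neg_one_of_neg (by omega)]
      omega

theorem algII_digit_invariant_general (B M : ℤ) (hB : M < B)
    (a a' s : ℤ)
    (ha' : a' = ⌈((B : ℝ) - 1) / 2⌉)
    (ha : a = a' + M)
    (hs : s = ⌈(a : ℝ) / ((B : ℝ) - M)⌉)
    (z q F : ℤ)
    (hq : q = if |z| ≤ a' then 0 else Int.sign z)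
    (hF : |F| ≤ M) :
    (∀ ℓ : ℤ, 1 ≤ ℓ → ℓ < s → |z| ≤ 2 * a - (ℓ - 1) * (B - M) →
      |z - q * B - F| ≤ 2 * a - ℓ * (B - M)) ∧
    (|z| ≤ 2 * a - (s - 1) * (B - M) → |z - q * B - F| ≤ a) := by
  have hBM : 0 < B - M := by omega
  rw [show (B : ℝ) - M = ((B - M : ℤ) : ℝ) by push_cast; ring] at hs
  have hs_ge : a ≤ s * (B - M) := hs ▸ le_ceil_div_mul hBM
  have hs_lt : (s - 1) * (B - M) < a := hs ▸ ceil_div_sub_one_mul_lt hBM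
  have hstep : ∀ C, a ≤ C → |z| ≤ C + (B - M) → |z - q * B - F| ≤ C := fun C hC hz =>
    hq ▸ abs_sub_digit_mul_sub_le hB (ha' ▸ sub_one_le_two_mul_ceil_half B) (ha ▸ hC) hz hF
  refine ⟨fun ℓ _ hℓs hz => hstep _ ?_ (by linarith), fun hz => hstep a le_rfl (by linarith)⟩
  nlinarith

theorem algII_digit_invariant (B M : ℤ) (hM : 1 ≤ M) (hB : M < B)
    (a a' s : ℤ)
    (ha' : a' = ⌈((B : ℝ) - 1) / 2⌉)
    (ha : a = a' + M)
    (hs : s = ⌈(a : ℝ) / ((B : ℝ) - M)⌉)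
    (z q F : ℤ)
    (hq : q = if |z| ≤ a' then 0 else Int.sign z)
    (hF : |F| ≤ M) :
    (∀ ℓ : ℤ, 1 ≤ ℓ → ℓ < s → |z| ≤ 2 * a - (ℓ - 1) * (B - M) →
      |z - q * B - F| ≤ 2 * a - ℓ * (B - M)) ∧
    (|z| ≤ 2 * a - (s - 1) * (B - M) → |z - q * B - F| ≤ a) :=
  algII_digit_invariant_general B M hB a a' s ha' ha hs z q F hq hF
end

section
/- Let α be an algebraic number of degree d over ℚ whose conjugates α₁,…,α_d all satisfy |α_i| ≠ 1, and assume |α| > 1. Then for every real t ≥ 1 there exists a nonzero polynomial Q(X) = a₀X^m + a₁X^{m-1} + ⋯ + a_m with integer coefficients and an index i₀ ∈ {1,…,m} such that Q(α) = 0 and |a_{i₀}| > t·∑_{i ∈ {0,…,m}\{i₀}} |a_i|. -/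
/-!
Graeffe's root-squaring method. Starting from an integer multiple of the minimal polynomial
of `α`, `k` squaring steps give an integer polynomial `P` whose roots are the `N`-th powers
(`N = 2 ^ k`) of the conjugates of `α`. If `r` conjugates lie outside the unit circle and `B` is
the product of their moduli, then up to the leading coefficient the coefficient of `X ^ (d - r)`
in `P` is the `r`-th elementary symmetric function of these powers. Its term coming from the large
conjugates has modulus `B ^ N`, whereas any other product of conjugate powers is at most
`(B * ρ) ^ N`, where `ρ < 1` depends only on the conjugates (this needs `|αᵢ| ≠ 1`). So for large
`N` this coefficient beats `t` times the sum of all the others, and `Q = P(X ^ N)` keeps both the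
dominance and the root `α`.
-/

open Polynomial Finset

namespace Finset

variable {ι : Type*} [DecidableEq ι]

theorem prod_le_of_nonempty {u : Finset ι} {f : ι → ℝ} {ρ : ℝ} (hf0 : ∀ i ∈ u, 0 ≤ f i)
    (hfρ : ∀ i ∈ u, f i ≤ ρ) (hρ1 : ρ ≤ 1) (hu : u.Nonempty) : ∏ i ∈ u, f i ≤ ρ := by
  obtain ⟨i, hi⟩ := hu
  rw [← mul_prod_erase u f hi]
  refine (mul_le_of_le_one_right (hf0 i hi) ?_).trans (hfρ i hi)
  exact prod_le_one (fun j hj => hf0 j (mem_of_mem_erase hj))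
    fun j hj => (hfρ j (mem_of_mem_erase hj)).trans hρ1

theorem prod_eq_prod_filter_one_lt_mul_prod_symmDiff {s t : Finset ι} {a : ι → ℝ}
    (ha : ∀ i ∈ s, 0 ≤ a i) (hts : t ⊆ s) :
    ∏ i ∈ t, a i =
      (∏ i ∈ s.filter (1 < a ·), a i) *
        ∏ i ∈ symmDiff t (s.filter (1 < a ·)), min (a i) (a i)⁻¹ := by
  set b := s.filter (1 < a ·)
  have hsmall : ∀ i ∈ t \ b, min (a i) (a i)⁻¹ = a i := by
    intro i hi
    obtain ⟨hit, hib⟩ := mem_sdiff.1 hi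
    have h1 : a i ≤ 1 := not_lt.1 fun h => hib (mem_filter.2 ⟨hts hit, h⟩)
    rcases (ha i (hts hit)).eq_or_lt with h0 | h0
    · simp [← h0]
    · exact min_eq_left (h1.trans (one_le_inv₀ h0 |>.2 h1))
  have hbig : ∀ i ∈ b \ t, min (a i) (a i)⁻¹ = (a i)⁻¹ := by
    intro i hi
    have h1 : 1 < a i := (mem_filter.1 (mem_sdiff.1 hi).1).2
    exact min_eq_right ((inv_lt_one_of_one_lt₀ h1).trans h1).le
  have hb0 : ∏ i ∈ b \ t, a i ≠ 0 :=
    prod_ne_zero_iff.2 fun i hi => (zero_lt_one.trans (mem_filter.1 (mem_sdiff.1 hi).1).2).ne'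
  rw [symmDiff_def, sup_eq_union, prod_union disjoint_sdiff_sdiff, prod_congr rfl hsmall,
    prod_congr rfl hbig, prod_inv_distrib, ← prod_inter_mul_prod_sdiff t b,
    ← prod_inter_mul_prod_sdiff b t, inter_comm]
  field_simp

theorem prod_le_prod_filter_one_lt_mul {s t : Finset ι} {a : ι → ℝ} {ρ : ℝ}
    (ha : ∀ i ∈ s, 0 ≤ a i) (hρ : ∀ i ∈ s, min (a i) (a i)⁻¹ ≤ ρ) (hρ1 : ρ ≤ 1)
    (hts : t ⊆ s) (htb : t ≠ s.filter (1 < a ·)) :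
    ∏ i ∈ t, a i ≤ (∏ i ∈ s.filter (1 < a ·), a i) * ρ := by
  have hsub : symmDiff t (s.filter (1 < a ·)) ⊆ s :=
    symmDiff_le (le_sup_of_le_right hts) (le_sup_of_le_right (filter_subset _ s))
  rw [prod_eq_prod_filter_one_lt_mul_prod_symmDiff ha hts]
  refine mul_le_mul_of_nonneg_left ?_ (prod_nonneg fun i hi => ha i (filter_subset _ s hi))
  exact prod_le_of_nonempty (fun i hi => le_min (ha i (hsub hi)) (inv_nonneg.2 (ha i (hsub hi))))
    (fun i hi => hρ i (hsub hi)) hρ1 (symmDiff_nonempty.2 htb)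

variable {𝕜 : Type*} [NormedField 𝕜]

theorem norm_sum_powersetCard_erase_prod_le {s : Finset ι} {w : ι → 𝕜} {ρ : ℝ}
    (hρ0 : 0 ≤ ρ) (hρ : ∀ i ∈ s, min ‖w i‖ ‖w i‖⁻¹ ≤ ρ) (hρ1 : ρ ≤ 1) (j : ℕ) :
    ‖∑ u ∈ (s.powersetCard j).erase (s.filter (1 < ‖w ·‖)), ∏ i ∈ u, w i‖ ≤
      (#s).choose j * ((∏ i ∈ s.filter (1 < ‖w ·‖), ‖w i‖) * ρ) := by
  set B := ∏ i ∈ s.filter (1 < ‖w ·‖), ‖w i‖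
  refine (norm_sum_le _ _).trans ((sum_le_card_nsmul _ _ (B * ρ) fun u hu => ?_).trans ?_)
  · obtain ⟨hub, hu⟩ := mem_erase.1 hu
    rw [norm_prod]
    exact prod_le_prod_filter_one_lt_mul (fun i _ => norm_nonneg _) hρ hρ1
      (mem_powersetCard.1 hu).1 hub
  · rw [nsmul_eq_mul, ← card_powersetCard]
    have : 0 ≤ B := prod_nonneg fun i _ => norm_nonneg _
    gcongr
    exact erase_subset _ _

theorem mul_sum_erase_norm_esymm_lt {s : Finset ι} {w : ι → 𝕜} {ρ t : ℝ} (hρ0 : 0 ≤ ρ)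
    (hρ : ∀ i ∈ s, min ‖w i‖ ‖w i‖⁻¹ ≤ ρ) (ht : 0 ≤ t) (htρ : (t + 1) * 2 ^ #s * ρ < 1) :
    t * ∑ j ∈ (range (#s + 1)).erase #(s.filter (1 < ‖w ·‖)),
        ‖∑ u ∈ s.powersetCard j, ∏ i ∈ u, w i‖ <
      ‖∑ u ∈ s.powersetCard #(s.filter (1 < ‖w ·‖)), ∏ i ∈ u, w i‖ := by
  set b := s.filter (1 < ‖w ·‖)
  set B := ∏ i ∈ b, ‖w i‖
  set E := fun j => ∑ u ∈ (s.powersetCard j).erase b, ∏ i ∈ u, w i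
  have hB : 0 < B := prod_pos fun i hi => zero_lt_one.trans (mem_filter.1 hi).2
  have hρ1 : ρ ≤ 1 := by
    have : (1 : ℝ) ≤ (t + 1) * 2 ^ #s := one_le_mul_of_one_le_of_one_le (by linarith)
      (one_le_pow₀ one_le_two)
    nlinarith
  have hE := norm_sum_powersetCard_erase_prod_le hρ0 hρ hρ1
  have hb : b ∈ s.powersetCard #b := mem_powersetCard.2 ⟨filter_subset _ s, rfl⟩
  have hmain : ∑ u ∈ s.powersetCard #b, ∏ i ∈ u, w i = ∏ i ∈ b, w i + E #b :=
    (add_sum_erase _ _ hb).symm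
  have hrest : ∀ j ∈ (range (#s + 1)).erase #b, ∑ u ∈ s.powersetCard j, ∏ i ∈ u, w i = E j :=
    fun j hj => (congrArg (∑ u ∈ ·, ∏ i ∈ u, w i)
      (erase_eq_of_notMem fun h => ne_of_mem_erase hj (mem_powersetCard.1 h).2.symm)).symm
  have hupper : ∑ j ∈ (range (#s + 1)).erase #b, ‖∑ u ∈ s.powersetCard j, ∏ i ∈ u, w i‖ ≤
      2 ^ #s * (B * ρ) := calc
    _ ≤ ∑ j ∈ range (#s + 1), ((#s).choose j : ℝ) * (B * ρ) := by
      rw [sum_congr rfl fun j hj => congrArg norm (hrest j hj)]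
      exact (sum_le_sum fun j _ => hE j).trans
        (sum_le_sum_of_subset_of_nonneg (erase_subset _ _) fun j _ _ => by positivity)
    _ = 2 ^ #s * (B * ρ) := by rw [← sum_mul, ← Nat.cast_sum, Nat.sum_range_choose]; push_cast; rfl
  have hlower : B - 2 ^ #s * (B * ρ) ≤ ‖∑ u ∈ s.powersetCard #b, ∏ i ∈ u, w i‖ := by
    rw [hmain]
    have : ‖E #b‖ ≤ 2 ^ #s * (B * ρ) :=
      (hE #b).trans (by gcongr; exact_mod_cast Nat.choose_le_two_pow _ _)
    have := norm_sub_norm_le (∏ i ∈ b, w i) (-E #b)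
    rw [norm_neg, sub_neg_eq_add, norm_prod] at this
    linarith
  nlinarith

end Finset

namespace Polynomial

variable {R S : Type*} [CommRing R] [CommRing S]

-- `p(X) * p(-X)` is even, and `contract 2` rewrites it as a polynomial in `X ^ 2`.
noncomputable def graeffe (p : R[X]) : R[X] :=
  contract 2 (p * p.comp (-X))

theorem map_graeffe (f : R →+* S) (p : R[X]) : (graeffe p).map f = graeffe (p.map f) := by
  rw [graeffe, graeffe, map_contract two_ne_zero, Polynomial.map_mul, map_comp, Polynomial.map_neg,
    map_X]

theorem graeffe_C_mul_prod_X_sub_C {ι : Type*} (c : R) (s : Finset ι) (v : ι → R) :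
    graeffe (C c * ∏ i ∈ s, (X - C (v i))) =
      C ((-1) ^ #s * c ^ 2) * ∏ i ∈ s, (X - C (v i ^ 2)) := by
  suffices h : (C c * ∏ i ∈ s, (X - C (v i))) * (C c * ∏ i ∈ s, (X - C (v i))).comp (-X) =
      expand R 2 (C ((-1) ^ #s * c ^ 2) * ∏ i ∈ s, (X - C (v i ^ 2))) by
    rw [graeffe, h, contract_expand 2 two_ne_zero]
  simp only [mul_comp, C_comp, prod_comp, sub_comp, X_comp, map_mul, map_prod, map_sub, expand_C,
    expand_X, map_pow, map_neg, map_one]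
  have hfactor : ∀ i ∈ s, (X - C (v i)) * (-X - C (v i)) = -1 * ((X : R[X]) ^ 2 - C (v i) ^ 2) :=
    fun i _ => by ring
  rw [mul_mul_mul_comm, ← prod_mul_distrib, prod_congr rfl hfactor, prod_mul_distrib, prod_const]
  ring

theorem iterate_graeffe_C_mul_prod_X_sub_C {ι : Type*} (c : R) (s : Finset ι) (v : ι → R)
    (k : ℕ) :
    ∃ ε : R, IsUnit ε ∧ graeffe^[k] (C c * ∏ i ∈ s, (X - C (v i))) =
      C (ε * c ^ 2 ^ k) * ∏ i ∈ s, (X - C (v i ^ 2 ^ k)) := by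
  induction k with
  | zero => exact ⟨1, isUnit_one, by simp⟩
  | succ k ih =>
    obtain ⟨ε, hε, h⟩ := ih
    refine ⟨(-1) ^ #s * ε ^ 2, (isUnit_neg_one.pow _).mul (hε.pow _), ?_⟩
    simp only [Function.iterate_succ_apply', h, graeffe_C_mul_prod_X_sub_C, ← pow_mul, pow_succ]
    ring_nf

end Polynomial

theorem natDegree_eq_card_of_map_eq_C_mul_prod {K ι : Type*} [Field K] [CharZero K] {P : ℤ[X]}
    {c : K} (hc : c ≠ 0) {s : Finset ι} {v : ι → K}
    (hP : P.map (Int.castRingHom K) = C c * ∏ i ∈ s, (X - C (v i))) : P.natDegree = #s := by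
  rw [← natDegree_map_eq_of_injective (RingHom.injective_int (Int.castRingHom K)) P, hP,
    natDegree_C_mul hc, natDegree_finsetProd_X_sub_C_eq_card]

theorem abs_coeff_of_map_eq_C_mul_prod {ι : Type*} {P : ℤ[X]} {c : ℂ} {s : Finset ι}
    {v : ι → ℂ} (hP : P.map (Int.castRingHom ℂ) = C c * ∏ i ∈ s, (X - C (v i))) {j : ℕ}
    (hj : j ≤ #s) :
    (|P.coeff j| : ℝ) = ‖c‖ * ‖∑ u ∈ s.powersetCard (#s - j), ∏ i ∈ u, -v i‖ := by
  have hX : ∏ i ∈ s, (X - C (v i)) = ∏ i ∈ s, (X + C (-v i)) := by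
    simp only [map_neg, sub_eq_add_neg]
  rw [← Complex.norm_intCast, ← norm_mul, ← prod_X_add_C_coeff s _ hj, ← coeff_C_mul, ← hX, ← hP,
    coeff_map, eq_intCast]

theorem aeval_eq_zero_of_map_eq_C_mul_prod {K ι : Type*} [Field K] {P : ℤ[X]} {c : K}
    {s : Finset ι} {v : ι → K} (hP : P.map (Int.castRingHom K) = C c * ∏ i ∈ s, (X - C (v i)))
    {i : ι} (hi : i ∈ s) : aeval (v i) P = 0 := by
  rw [aeval_def, eval₂_eq_eval_map, algebraMap_int_eq, hP, eval_mul, eval_prod,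
    prod_eq_zero hi (by simp), mul_zero]

theorem exists_int_map_eq_C_mul_prod_aroots_minpoly {K : Type*} [Field K] [CharZero K]
    [IsAlgClosed K] [DecidableEq K] {α : K} (hα : IsIntegral ℚ α) :
    ∃ (P : ℤ[X]) (c : K), c ≠ 0 ∧
      P.map (Int.castRingHom K) = C c * ∏ z ∈ ((minpoly ℚ α).aroots K).toFinset, (X - C z) := by
  set q := minpoly ℚ α
  have hnodup : (q.aroots K).Nodup := nodup_roots (minpoly.irreducible hα).separable.map
  have hsplit : q.map (algebraMap ℚ K) = ∏ z ∈ (q.aroots K).toFinset, (X - C z) := by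
    rw [Finset.prod, Multiset.toFinset_val, hnodup.dedup, aroots_def]
    exact (IsAlgClosed.splits _).eq_prod_roots_of_monic ((minpoly.monic hα).map _)
  obtain ⟨b, hb, hbq⟩ := IsLocalization.integerNormalization_spec (nonZeroDivisors ℤ) q
  refine ⟨IsLocalization.integerNormalization (nonZeroDivisors ℤ) q, b,
    Int.cast_ne_zero.2 (nonZeroDivisors.ne_zero hb), ?_⟩
  rw [← hsplit, show Int.castRingHom K = (algebraMap ℚ K).comp (algebraMap ℤ ℚ) from
    RingHom.ext_int _ _, ← Polynomial.map_map, hbq, zsmul_eq_mul, ← C_eq_intCast,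
    Polynomial.map_mul, map_C]
  simp

def IsDominantCoeff (t : ℝ) (Q : ℤ[X]) (e : ℕ) : Prop :=
  (|Q.coeff e| : ℝ) > t * ∑ i ∈ (range (Q.natDegree + 1)).erase e, (|Q.coeff i| : ℝ)

theorem sum_erase_abs_coeff_expand (P : ℤ[X]) {N : ℕ} (hN : 0 < N) (e : ℕ) :
    ∑ i ∈ (range ((expand ℤ N P).natDegree + 1)).erase (N * e), (|(expand ℤ N P).coeff i| : ℝ) =
      ∑ j ∈ (range (P.natDegree + 1)).erase e, (|P.coeff j| : ℝ) := by
  have hinj : Set.InjOn (N * ·) ↑((range (P.natDegree + 1)).erase e) :=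
    fun a _ b _ h => Nat.eq_of_mul_eq_mul_left hN h
  have hsub : ((range (P.natDegree + 1)).erase e).image (N * ·) ⊆
      (range ((expand ℤ N P).natDegree + 1)).erase (N * e) := by
    simp only [natDegree_expand, subset_iff, mem_image, mem_erase, mem_range]
    rintro _ ⟨j, ⟨hje, hj⟩, rfl⟩
    exact ⟨fun h => hje (Nat.eq_of_mul_eq_mul_left hN h), by nlinarith⟩
  have hzero : ∀ i ∈ (range ((expand ℤ N P).natDegree + 1)).erase (N * e),
      i ∉ ((range (P.natDegree + 1)).erase e).image (N * ·) →
        (|(expand ℤ N P).coeff i| : ℝ) = 0 := by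
    intro i hi hni
    rw [coeff_expand hN]
    split_ifs with hdvd
    · obtain ⟨j, rfl⟩ := hdvd
      simp only [natDegree_expand, mem_erase, mem_range] at hi
      exact absurd (mem_image_of_mem _ (mem_erase.2 ⟨fun h => hi.1 (congrArg (N * ·) h),
        mem_range.2 (by nlinarith)⟩)) hni
    · simp
  rw [← sum_subset hsub hzero, sum_image hinj]
  simp only [coeff_expand_mul' hN]

theorem IsDominantCoeff.expand {t : ℝ} {P : ℤ[X]} {e N : ℕ} (hN : 0 < N)
    (h : IsDominantCoeff t P e) : IsDominantCoeff t (expand ℤ N P) (N * e) := by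
  rwa [IsDominantCoeff, sum_erase_abs_coeff_expand P hN, coeff_expand_mul' hN]

theorem isDominantCoeff_of_map_eq_C_mul_prod {ι : Type*} [DecidableEq ι] {P : ℤ[X]} {c : ℂ}
    (hc : c ≠ 0) {s : Finset ι} {v : ι → ℂ}
    (hP : P.map (Int.castRingHom ℂ) = C c * ∏ i ∈ s, (X - C (v i))) {ρ t : ℝ} (hρ0 : 0 ≤ ρ)
    (hρ : ∀ i ∈ s, min ‖v i‖ ‖v i‖⁻¹ ≤ ρ) (ht : 0 ≤ t) (htρ : (t + 1) * 2 ^ #s * ρ < 1) :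
    IsDominantCoeff t P (#s - #(s.filter (1 < ‖v ·‖))) := by
  have hdom := mul_sum_erase_norm_esymm_lt (w := fun i => -v i) hρ0 (by simpa only [norm_neg])
    ht htρ
  simp only [norm_neg] at hdom
  set r := #(s.filter (1 < ‖v ·‖))
  have hr : r ≤ #s := card_filter_le _ _
  have hsum : ∑ j ∈ (range (#s + 1)).erase (#s - r), (|P.coeff j| : ℝ) =
      ‖c‖ * ∑ j ∈ (range (#s + 1)).erase r, ‖∑ u ∈ s.powersetCard j, ∏ i ∈ u, -v i‖ := by
    rw [mul_sum]
    refine sum_nbij' (#s - ·) (#s - ·) ?_ ?_ ?_ ?_ fun j hj => ?_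
    · simp only [mem_erase, mem_range]; omega
    · simp only [mem_erase, mem_range]; omega
    · simp only [mem_erase, mem_range]; omega
    · simp only [mem_erase, mem_range]; omega
    · exact abs_coeff_of_map_eq_C_mul_prod hP (by simp only [mem_erase, mem_range] at hj; omega)
  rw [IsDominantCoeff, natDegree_eq_card_of_map_eq_C_mul_prod hc hP, hsum,
    abs_coeff_of_map_eq_C_mul_prod hP (Nat.sub_le _ _), Nat.sub_sub_self hr, mul_left_comm]
  exact mul_lt_mul_of_pos_left hdom (norm_pos_iff.2 hc)

theorem exists_nonneg_lt_one_forall_min_norm_inv_le {𝕜 : Type*} [NormedField 𝕜] {s : Finset 𝕜}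
    (hs : s.Nonempty) (hs1 : ∀ z ∈ s, ‖z‖ ≠ 1) :
    ∃ ρ : ℝ, 0 ≤ ρ ∧ ρ < 1 ∧ ∀ z ∈ s, min ‖z‖ ‖z‖⁻¹ ≤ ρ := by
  set f := fun z : 𝕜 => min ‖z‖ ‖z‖⁻¹
  refine ⟨s.sup' hs f, ?_, (sup'_lt_iff hs).2 fun z hz => ?_, fun z hz => le_sup' f hz⟩
  · exact (le_min (norm_nonneg _) (inv_nonneg.2 (norm_nonneg _))).trans (le_sup' f hs.choose_spec)
  · rcases (hs1 z hz).lt_or_gt with h | h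
    · exact (min_le_left _ _).trans_lt h
    · exact (min_le_right _ _).trans_lt (inv_lt_one_of_one_lt₀ h)

theorem min_pow_inv_pow_le_pow {x ρ : ℝ} (hx : 0 ≤ x) (h : min x x⁻¹ ≤ ρ) (N : ℕ) :
    min (x ^ N) (x ^ N)⁻¹ ≤ ρ ^ N := by
  rw [← inv_pow]
  rcases min_le_iff.1 h with h | h
  · exact (min_le_left _ _).trans (pow_le_pow_left₀ hx h N)
  · exact (min_le_right _ _).trans (pow_le_pow_left₀ (inv_nonneg.2 hx) h N)

theorem exists_mul_pow_two_pow_lt_one (A : ℝ) {ρ : ℝ} (hρ0 : 0 ≤ ρ) (hρ1 : ρ < 1) :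
    ∃ k : ℕ, A * ρ ^ 2 ^ k < 1 :=
  ((((tendsto_pow_atTop_nhds_zero_of_lt_one hρ0 hρ1).comp
    (tendsto_pow_atTop_atTop_of_one_lt one_lt_two)).const_mul A).eventually
    (gt_mem_nhds (by simp))).exists

theorem exists_dominant_polynomial (α : ℂ) (halg : IsAlgebraic ℚ α)
    (hconj : ∀ γ : ℂ, aeval γ (minpoly ℚ α) = 0 → ‖γ‖ ≠ 1)
    (hα : 1 < ‖α‖) (t : ℝ) (ht : 1 ≤ t) :
    ∃ Q : ℤ[X], Q ≠ 0 ∧ aeval α Q = 0 ∧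
      ∃ e : ℕ, e < Q.natDegree ∧
        (|Q.coeff e| : ℝ) >
          t * ∑ i ∈ (Finset.range (Q.natDegree + 1)).erase e, (|Q.coeff i| : ℝ) := by
  classical
  have hint := halg.isIntegral
  set s := ((minpoly ℚ α).aroots ℂ).toFinset
  have hαs : α ∈ s :=
    Multiset.mem_toFinset.2 (mem_aroots.2 ⟨minpoly.ne_zero hint, minpoly.aeval ℚ α⟩)
  obtain ⟨ρ, hρ0, hρ1, hρ⟩ := exists_nonneg_lt_one_forall_min_norm_inv_le ⟨α, hαs⟩
    fun z hz => hconj z (mem_aroots.1 (Multiset.mem_toFinset.1 hz)).2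
  obtain ⟨k, hk⟩ := exists_mul_pow_two_pow_lt_one ((t + 1) * 2 ^ #s) hρ0 hρ1
  set N := 2 ^ k
  have hN : 0 < N := by positivity
  obtain ⟨P₀, c, hc, hP₀⟩ := exists_int_map_eq_C_mul_prod_aroots_minpoly hint
  obtain ⟨ε, hε, hgraeffe⟩ := iterate_graeffe_C_mul_prod_X_sub_C c s (fun z => z) k
  set P := graeffe^[k] P₀
  have hP : P.map (Int.castRingHom ℂ) = C (ε * c ^ N) * ∏ z ∈ s, (X - C (z ^ N)) := by
    rw [(Function.Semiconj.iterate_right (map_graeffe (Int.castRingHom ℂ)) k) P₀, hP₀, hgraeffe]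
  have hcN : ε * c ^ N ≠ 0 := mul_ne_zero hε.ne_zero (pow_ne_zero _ hc)
  have hdom := isDominantCoeff_of_map_eq_C_mul_prod hcN hP (pow_nonneg hρ0 N)
    (fun z hz => norm_pow z N ▸ min_pow_inv_pow_le_pow (norm_nonneg z) (hρ z hz) N)
    (by linarith) hk
  have hr : 0 < #(s.filter (1 < ‖· ^ N‖)) :=
    card_pos.2 ⟨α, mem_filter.2 ⟨hαs, by rw [norm_pow]; exact one_lt_pow₀ hα hN.ne'⟩⟩
  have he : N * (#s - #(s.filter (1 < ‖· ^ N‖))) < (expand ℤ N P).natDegree := by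
    rw [natDegree_expand, natDegree_eq_card_of_map_eq_C_mul_prod hcN hP, mul_comm #s]
    exact Nat.mul_lt_mul_of_pos_left (Nat.sub_lt (hr.trans_le (card_filter_le _ _)) hr) hN
  refine ⟨expand ℤ N P, ne_zero_of_natDegree_gt he, ?_, _, he, hdom.expand hN⟩
  rw [expand_aeval, aeval_eq_zero_of_map_eq_C_mul_prod hP hαs]
end
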